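/- IPT contains the RS series: with F(Z) = I + ε·G ∘ (Z·𝒟(ΔZ) − ΔZ) (perturbation εΔ) and Z^{(k)} = F^k(I), one has Z^{(k)} = Σ_{ℓ=0}^{k} ε^ℓ A^{[ℓ]} + O(ε^{k+1}), where A^{[ℓ]} are the Rayleigh–Schrödinger correction matrices defined by A^{[0]} = I and A^{[ℓ]} = G ∘ ( Σ_{s=0}^{ℓ−1} A^{[ℓ−1−s]}·𝒟(Δ A^{[s]}) − Δ A^{[ℓ−1]} ). -/

import Mathlib

/-!
Factoring out `ε`, `F(Z) = I + G ∘ ε (Z 𝒟(ΔZ) − ΔZ)`, so by the Cauchy product the coefficient of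
`ε^(ℓ+1)` in `F(Z)` is the Rayleigh–Schrödinger recursion applied to the coefficients of `Z` of
order `≤ ℓ`. Hence if `Z` agrees with the RS series up to order `k`, `F(Z)` agrees up to `k + 1`.
-/

open Matrix Polynomial

namespace Matrix

variable {R : Type*} [CommRing R] {m n : Type*}

def coeff (Z : Matrix m n R[X]) (k : ℕ) : Matrix m n R := Z.map (Polynomial.coeff · k)

@[simp]
lemma coeff_apply (Z : Matrix m n R[X]) (k : ℕ) (i : m) (j : n) :
    Z.coeff k i j = (Z i j).coeff k := rfl

lemma coeff_add (Z W : Matrix m n R[X]) (k : ℕ) :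
    (Z + W).coeff k = Z.coeff k + W.coeff k := by
  ext i j; simp

lemma coeff_sub (Z W : Matrix m n R[X]) (k : ℕ) :
    (Z - W).coeff k = Z.coeff k - W.coeff k := by
  ext i j; simp

lemma coeff_X_smul_zero (Z : Matrix m n R[X]) : ((X : R[X]) • Z).coeff 0 = 0 := by
  ext i j; simp

lemma coeff_X_smul_succ (Z : Matrix m n R[X]) (k : ℕ) :
    ((X : R[X]) • Z).coeff (k + 1) = Z.coeff k := by
  ext i j; simp

lemma coeff_map_C_hadamard (G : Matrix m n R) (Z : Matrix m n R[X]) (k : ℕ) :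
    (G.map C ⊙ Z).coeff k = G ⊙ Z.coeff k := by
  ext i j; simp

section DecidableEq

variable [DecidableEq n]

lemma coeff_one_zero : (1 : Matrix n n R[X]).coeff 0 = 1 := by
  ext i j; by_cases h : i = j <;> simp [one_apply, h]

lemma coeff_one_succ (k : ℕ) : (1 : Matrix n n R[X]).coeff (k + 1) = 0 := by
  ext i j; by_cases h : i = j <;> simp [h, Polynomial.coeff_one]

end DecidableEq

section Fintype

variable [Fintype n]

lemma coeff_map_C_mul {l : Type*} (Δ : Matrix l n R) (Z : Matrix n m R[X]) (k : ℕ) :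
    (Δ.map C * Z).coeff k = Δ * Z.coeff k := by
  ext i j; simp [mul_apply]

lemma coeff_mul_diagonal [DecidableEq n] (Z : Matrix m n R[X]) (d : n → R[X]) (k : ℕ) :
    (Z * diagonal d).coeff k =
      ∑ s ∈ Finset.range (k + 1), Z.coeff (k - s) * diagonal fun j => (d j).coeff s := by
  ext i j
  simp only [mul_diagonal, coeff_apply, sum_apply, mul_comm (Z i j), Polynomial.coeff_mul,
    Finset.Nat.sum_antidiagonal_eq_sum_range_succ fun a b => (d j).coeff a * (Z i j).coeff b]
  simp [mul_comm]

end Fintype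

end Matrix

section IPT

variable {R : Type*} [CommRing R] {n : Type*} [Fintype n] [DecidableEq n]

/-- The IPT map `F`, with the formal variable `X` in the role of `ε`. -/
noncomputable def iptMap (G Δ : Matrix n n R) (Z : Matrix n n R[X]) : Matrix n n R[X] :=
  1 + G.map C ⊙
    (Z * diagonal (fun i => (((X : R[X]) • Δ.map C) * Z) i i) - ((X : R[X]) • Δ.map C) * Z)

/-- The Rayleigh–Schrödinger recursion reads `A (ℓ + 1) = rsStep G Δ A ℓ`. -/
def rsStep (G Δ : Matrix n n R) (A : ℕ → Matrix n n R) (ℓ : ℕ) : Matrix n n R :=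
  G ⊙ (∑ s ∈ Finset.range (ℓ + 1), A (ℓ - s) * diagonal (fun j => (Δ * A s) j j) - Δ * A ℓ)

lemma rsStep_congr (G Δ : Matrix n n R) {A B : ℕ → Matrix n n R} {ℓ : ℕ}
    (h : ∀ b ≤ ℓ, A b = B b) : rsStep G Δ A ℓ = rsStep G Δ B ℓ := by
  unfold rsStep
  congr 2
  · refine Finset.sum_congr rfl fun s hs => ?_
    rw [Finset.mem_range] at hs
    rw [h s (by omega), h (ℓ - s) (by omega)]
  · rw [h ℓ le_rfl]

lemma iptMap_eq (G Δ : Matrix n n R) (Z : Matrix n n R[X]) :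
    iptMap G Δ Z = 1 + G.map C ⊙
      ((X : R[X]) • (Z * diagonal (fun i => (Δ.map C * Z) i i) - Δ.map C * Z)) := by
  ext i j
  simp [iptMap, mul_diagonal, mul_sub, mul_left_comm]

lemma coeff_iptMap_zero (G Δ : Matrix n n R) (Z : Matrix n n R[X]) :
    (iptMap G Δ Z).coeff 0 = 1 := by
  rw [iptMap_eq, Matrix.coeff_add, Matrix.coeff_one_zero, coeff_map_C_hadamard,
    coeff_X_smul_zero, hadamard_zero, add_zero]

lemma coeff_iptMap_succ (G Δ : Matrix n n R) (Z : Matrix n n R[X]) (ℓ : ℕ) :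
    (iptMap G Δ Z).coeff (ℓ + 1) = rsStep G Δ Z.coeff ℓ := by
  rw [iptMap_eq, Matrix.coeff_add, coeff_one_succ, zero_add, coeff_map_C_hadamard,
    coeff_X_smul_succ, Matrix.coeff_sub, coeff_mul_diagonal, coeff_map_C_mul, rsStep]
  simp only [← Matrix.coeff_apply, Matrix.coeff_map_C_mul]

lemma coeff_iterate_iptMap (G Δ : Matrix n n R) {A : ℕ → Matrix n n R} (hA0 : A 0 = 1)
    (hA : ∀ ℓ, A (ℓ + 1) = rsStep G Δ A ℓ) {k ℓ : ℕ} (hℓ : ℓ ≤ k) :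
    ((iptMap G Δ)^[k] 1).coeff ℓ = A ℓ := by
  induction k generalizing ℓ with
  | zero =>
    obtain rfl : ℓ = 0 := by omega
    rw [Function.iterate_zero_apply, Matrix.coeff_one_zero, hA0]
  | succ k ih =>
    rw [Function.iterate_succ_apply']
    rcases ℓ with _ | ℓ
    · rw [coeff_iptMap_zero, hA0]
    · rw [coeff_iptMap_succ, hA, rsStep_congr G Δ fun b hb => ih (by omega)]

end IPT

theorem IPT_contains_RS_series_general {n : ℕ} (Δ : Matrix (Fin n) (Fin n) ℂ)
    (G : Matrix (Fin n) (Fin n) ℂ)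
    (A : ℕ → Matrix (Fin n) (Fin n) ℂ) (hA0 : A 0 = 1)
    (hA : ∀ ℓ : ℕ, A (ℓ + 1) =
      G ⊙ (∑ s ∈ Finset.range (ℓ + 1),
              A (ℓ - s) * Matrix.diagonal (fun j => (Δ * A s) j j)
            - Δ * A ℓ))
    (F : Matrix (Fin n) (Fin n) (Polynomial ℂ) → Matrix (Fin n) (Fin n) (Polynomial ℂ))
    (hF : F = fun Z =>
      1 + (G.map Polynomial.C) ⊙
        (Z * Matrix.diagonal
            (fun i => (((Polynomial.X : Polynomial ℂ) • Δ.map Polynomial.C) * Z) i i)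
          - ((Polynomial.X : Polynomial ℂ) • Δ.map Polynomial.C) * Z)) :
    ∀ k ℓ : ℕ, ℓ ≤ k → ∀ i j : Fin n,
      ((F^[k] 1) i j).coeff ℓ = A ℓ i j := by
  subst hF
  intro k ℓ hℓ i j
  exact congrFun₂ (coeff_iterate_iptMap G Δ hA0 hA hℓ) i j

/-- IPT contains the Rayleigh–Schrödinger series: with the perturbation `εΔ` treated
as a formal (polynomial) variable, the `k`-th IPT iterate `Z^(k) = F^k(I)` agrees,
in every coefficient of `ε^ℓ` with `ℓ ≤ k`, with the RS partial sum `Σ εˡ Aˡ`. -/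
theorem IPT_contains_RS_series {n : ℕ} (ε : Fin n → ℂ)
    (hdist : Function.Injective ε) (Δ : Matrix (Fin n) (Fin n) ℂ)
    (G : Matrix (Fin n) (Fin n) ℂ)
    (hG : G = Matrix.of fun j k => if j = k then 0 else (ε j - ε k)⁻¹)
    (A : ℕ → Matrix (Fin n) (Fin n) ℂ) (hA0 : A 0 = 1)
    (hA : ∀ ℓ : ℕ, A (ℓ + 1) =
      G ⊙ (∑ s ∈ Finset.range (ℓ + 1),
              A (ℓ - s) * Matrix.diagonal (fun j => (Δ * A s) j j)
            - Δ * A ℓ))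
    (F : Matrix (Fin n) (Fin n) (Polynomial ℂ) → Matrix (Fin n) (Fin n) (Polynomial ℂ))
    (hF : F = fun Z =>
      1 + (G.map Polynomial.C) ⊙
        (Z * Matrix.diagonal
            (fun i => (((Polynomial.X : Polynomial ℂ) • Δ.map Polynomial.C) * Z) i i)
          - ((Polynomial.X : Polynomial ℂ) • Δ.map Polynomial.C) * Z)) :
    ∀ k ℓ : ℕ, ℓ ≤ k → ∀ i j : Fin n,
      ((F^[k] 1) i j).coeff ℓ = A ℓ i j :=
  IPT_contains_RS_series_general Δ G A hA0 hA F hF
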